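/- arXiv:2106.09160 — 3 statements merged into one kernel-verified Lean document; each statement's English description precedes it below -/
import Mathlib

section
/- Let p ∈ [1,∞) and q ∈ [p,∞), and let g ∈ L^p(Q₁). There exists a constant C depending only on p and q such that for all 0 < t₁ ≤ t₂ ≤ s and all y with Q_{s+t₁+t₂}(y) ⊆ Q₁, one has ⨍_{Q_s(y)} (M_{t₂}^p[g])^q ≤ C ⨍_{Q_{s+t₂}(y)} (M_{t₁}^p[g])^q. -/
open MeasureTheory

/-- The open cube `Q_r(x) = x + (-r,r)³` in `ℝ³` (the ball of radius `r` in the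
sup metric on `Fin 3 → ℝ`). -/
noncomputable def cube (x : Fin 3 → ℝ) (r : ℝ) : Set (Fin 3 → ℝ) := Metric.ball x r

/-- The averaging operator `M_t^p[g](x) = (⨍_{Q_t(x)} |g|^p)^{1/p}`. -/
noncomputable def avgOp (p t : ℝ) (g : (Fin 3 → ℝ) → ℝ) (x : Fin 3 → ℝ) : ℝ :=
  (⨍ y in cube x t, |g y| ^ p) ^ (1 / p)

/-!
Write `F = |g|^p`, `A_t F(z) = ⨍_{Q_t(z)} F` and `r = q/p ≥ 1`, so that `M_t^p[g]^q = (A_t F)^r`.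
A cube of radius `t₁ ≤ t₂` centred in `Q_{t₂}(z)` keeps at least `1/8` of its volume inside
`Q_{t₂}(z)`, so by Fubini `A_{t₂}F ≤ 8 A_{t₂}(A_{t₁}F)`, and by Jensen
`(A_{t₂}F)^r ≤ 8^r A_{t₂}((A_{t₁}F)^r)`. Integrating over `Q_s(y)` and applying Fubini again,
`∫_{Q_s(y)} A_{t₂}G ≤ ∫_{Q_{s+t₂}(y)} G`, and `|Q_{s+t₂}| ≤ 8 |Q_s|` because `t₂ ≤ s`; hence
`C = 8^{1+q/p}`.
-/

open Metric Module
open scoped ENNReal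

section MetricMeasure

variable {X : Type*} [PseudoMetricSpace X]

lemma indicator_ball_apply_eq_indicator_dist_lt (F : X → ℝ≥0∞) (t : ℝ) (w u : X) :
    (ball w t).indicator F u =
      {p : X × X | dist p.2 p.1 < t}.indicator (fun p => F p.2) (w, u) := by
  simp only [Set.indicator, mem_ball, Set.mem_ofPred_eq]

variable [MeasurableSpace X] [OpensMeasurableSpace X] [SecondCountableTopology X]
  {μ : Measure X} {F : X → ℝ≥0∞}

lemma measurableSet_dist_lt (t : ℝ) : MeasurableSet {p : X × X | dist p.2 p.1 < t} :=
  measurableSet_lt (measurable_snd.dist measurable_fst) measurable_const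

theorem Measurable.setLIntegral_ball [SFinite μ] (hF : Measurable F) (t : ℝ) :
    Measurable fun w => ∫⁻ u in ball w t, F u ∂μ := by
  simp_rw [← lintegral_indicator measurableSet_ball, indicator_ball_apply_eq_indicator_dist_lt]
  exact ((hF.comp measurable_snd).indicator (measurableSet_dist_lt t)).lintegral_prod_right'

theorem lintegral_setLIntegral_ball {ν : Measure X} [SFinite μ] [SFinite ν] (hF : Measurable F)
    (t : ℝ) : ∫⁻ w, ∫⁻ u in ball w t, F u ∂μ ∂ν = ∫⁻ u, ν (ball u t) * F u ∂μ := by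
  simp_rw [← lintegral_indicator measurableSet_ball, indicator_ball_apply_eq_indicator_dist_lt]
  rw [lintegral_lintegral_swap (f := fun w u => {p : X × X | dist p.2 p.1 < t}.indicator
    (fun p => F p.2) (w, u))
    ((hF.comp measurable_snd).indicator (measurableSet_dist_lt t)).aemeasurable]
  refine lintegral_congr fun u => ?_
  rw [mul_comm, ← lintegral_indicator_const measurableSet_ball]
  congr with w
  simp only [Set.indicator, mem_ball, Set.mem_ofPred_eq, dist_comm]

end MetricMeasure

theorem rpow_laverage_le_laverage_rpow {α : Type*} [MeasurableSpace α] {μ : Measure α}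
    [IsFiniteMeasure μ] {f : α → ℝ≥0∞} (hf : AEMeasurable f μ) {r : ℝ} (hr : 1 ≤ r) :
    (⨍⁻ x, f x ∂μ) ^ r ≤ ⨍⁻ x, f x ^ r ∂μ := by
  rcases eq_zero_or_neZero μ with rfl | _
  · simp [ENNReal.zero_rpow_of_pos (zero_lt_one.trans_le hr)]
  have h := eLpNorm'_le_eLpNorm'_of_exponent_le one_pos hr ((μ Set.univ)⁻¹ • μ)
    (hf.smul_measure _).aestronglyMeasurable
  simp only [eLpNorm', enorm_eq_self, ENNReal.rpow_one, div_one] at h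
  rw [laverage_eq', laverage_eq']
  calc _ ≤ ((∫⁻ x, f x ^ r ∂(μ Set.univ)⁻¹ • μ) ^ (1 / r)) ^ r :=
        ENNReal.rpow_le_rpow h (by linarith)
    _ = _ := by rw [← ENNReal.rpow_mul, one_div_mul_cancel (by linarith), ENNReal.rpow_one]

lemma exists_ball_subset_ball_inter_ball {E : Type*} [NormedAddCommGroup E] [NormedSpace ℝ E]
    {u z : E} {t₁ t₂ : ℝ} (ht₁ : 0 < t₁) (ht₁₂ : t₁ ≤ t₂)
    (hu : u ∈ ball z t₂) : ∃ c, ball c (t₁ / 2) ⊆ ball u t₁ ∩ ball z t₂ := by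
  obtain ⟨c, huc, hcz⟩ := exists_dist_lt_lt (half_pos ht₁) (by linarith : 0 < t₂ - t₁ / 2)
    (by simpa using hu : dist u z < t₂ - t₁ / 2 + t₁ / 2)
  refine ⟨c, Set.subset_inter (ball_subset_ball' ?_) (ball_subset_ball' ?_)⟩
  · rw [dist_comm]; linarith
  · linarith

section AddHaar

variable {E : Type*} [NormedAddCommGroup E] [MeasurableSpace E] [BorelSpace E]
  {μ : Measure E} [μ.IsAddHaarMeasure] {F : E → ℝ≥0∞}

lemma setLAverage_ball_eq (F : E → ℝ≥0∞) (z : E) (t : ℝ) :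
    ⨍⁻ u in ball z t, F u ∂μ = (μ (ball 0 t))⁻¹ * ∫⁻ u in ball z t, F u ∂μ := by
  rw [setLAverage_eq, Measure.addHaar_ball_center, ENNReal.div_eq_inv_mul]

lemma setLAverage_ball_le_of_subset {U : Set E} {z : E} {t : ℝ} (h : ball z t ⊆ U) :
    ⨍⁻ u in ball z t, F u ∂μ ≤ (μ (ball 0 t))⁻¹ * ∫⁻ u in U, F u ∂μ := by
  rw [setLAverage_ball_eq]
  gcongr

variable [NormedSpace ℝ E] [FiniteDimensional ℝ E]

theorem Measurable.setLAverage_ball (hF : Measurable F) (t : ℝ) :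
    Measurable fun z => ⨍⁻ u in ball z t, F u ∂μ := by
  simp_rw [setLAverage_ball_eq]
  exact (hF.setLIntegral_ball t).const_mul _

lemma addHaar_ball_two_mul (x : E) (r : ℝ) :
    μ (ball x (2 * r)) = 2 ^ finrank ℝ E * μ (ball x r) := by
  rw [Measure.addHaar_ball_mul_of_pos μ x two_pos, Measure.addHaar_ball_center μ x r,
    ENNReal.ofReal_pow zero_le_two, ENNReal.ofReal_ofNat]

lemma addHaar_ball_le_two_pow_mul_addHaar_ball_inter {u z : E} {t₁ t₂ : ℝ} (ht₁ : 0 < t₁)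
    (ht₁₂ : t₁ ≤ t₂) (hu : u ∈ ball z t₂) :
    μ (ball u t₁) ≤ 2 ^ finrank ℝ E * μ (ball u t₁ ∩ ball z t₂) := by
  obtain ⟨c, hc⟩ := exists_ball_subset_ball_inter_ball ht₁ ht₁₂ hu
  calc μ (ball u t₁) = 2 ^ finrank ℝ E * μ (ball c (t₁ / 2)) := by
        rw [← addHaar_ball_two_mul, mul_div_cancel₀ _ two_ne_zero, Measure.addHaar_ball_center μ u,
          Measure.addHaar_ball_center μ c]
    _ ≤ _ := by gcongr

theorem setLAverage_ball_le_two_pow_mul_setLAverage_setLAverage (hF : Measurable F) (z : E)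
    {t₁ t₂ : ℝ} (ht₁ : 0 < t₁) (ht₁₂ : t₁ ≤ t₂) :
    ⨍⁻ u in ball z t₂, F u ∂μ ≤
      2 ^ finrank ℝ E * ⨍⁻ w in ball z t₂, ⨍⁻ u in ball w t₁, F u ∂μ ∂μ := by
  set V := μ (ball (0 : E) t₁)
  have hV₀ : V ≠ 0 := (measure_ball_pos μ 0 ht₁).ne'
  have hV : V ≠ ∞ := measure_ball_lt_top.ne
  have key : ∫⁻ u in ball z t₂, F u ∂μ ≤
      2 ^ finrank ℝ E * ∫⁻ w in ball z t₂, ⨍⁻ u in ball w t₁, F u ∂μ ∂μ := by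
    calc ∫⁻ u in ball z t₂, F u ∂μ = V⁻¹ * ∫⁻ u in ball z t₂, V * F u ∂μ := by
          rw [lintegral_const_mul' _ _ hV, ← mul_assoc, ENNReal.inv_mul_cancel hV₀ hV, one_mul]
      _ ≤ V⁻¹ * ∫⁻ u in ball z t₂,
            2 ^ finrank ℝ E * (μ.restrict (ball z t₂) (ball u t₁) * F u) ∂μ := by
          gcongr V⁻¹ * ?_
          refine setLIntegral_mono' measurableSet_ball fun u hu => ?_
          rw [Measure.restrict_apply measurableSet_ball, ← mul_assoc,
            show V = μ (ball u t₁) from (Measure.addHaar_ball_center μ u t₁).symm]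
          gcongr
          exact addHaar_ball_le_two_pow_mul_addHaar_ball_inter ht₁ ht₁₂ hu
      _ ≤ V⁻¹ * ∫⁻ u, 2 ^ finrank ℝ E * (μ.restrict (ball z t₂) (ball u t₁) * F u) ∂μ := by
          gcongr
          exact Measure.restrict_le_self
      _ = 2 ^ finrank ℝ E * ∫⁻ w in ball z t₂, ⨍⁻ u in ball w t₁, F u ∂μ ∂μ := by
          simp_rw [setLAverage_ball_eq]
          rw [lintegral_const_mul' _ _ (ENNReal.inv_ne_top.2 hV₀), lintegral_setLIntegral_ball hF,
            lintegral_const_mul' _ _ (by simp)]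
          ring
  rw [setLAverage_eq, setLAverage_eq, ← mul_div_assoc]
  exact ENNReal.div_le_div_right key _

theorem rpow_setLAverage_ball_le (hF : Measurable F) (z : E) {r t₁ t₂ : ℝ} (hr : 1 ≤ r)
    (ht₁ : 0 < t₁) (ht₁₂ : t₁ ≤ t₂) :
    (⨍⁻ u in ball z t₂, F u ∂μ) ^ r ≤
      (2 ^ finrank ℝ E) ^ r * ⨍⁻ w in ball z t₂, (⨍⁻ u in ball w t₁, F u ∂μ) ^ r ∂μ := by
  have : IsFiniteMeasure (μ.restrict (ball z t₂)) :=
    isFiniteMeasure_restrict.2 measure_ball_lt_top.ne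
  calc (⨍⁻ u in ball z t₂, F u ∂μ) ^ r
      ≤ (2 ^ finrank ℝ E * ⨍⁻ w in ball z t₂, ⨍⁻ u in ball w t₁, F u ∂μ ∂μ) ^ r :=
        ENNReal.rpow_le_rpow
          (setLAverage_ball_le_two_pow_mul_setLAverage_setLAverage hF z ht₁ ht₁₂) (by linarith)
    _ = (2 ^ finrank ℝ E) ^ r * (⨍⁻ w in ball z t₂, ⨍⁻ u in ball w t₁, F u ∂μ ∂μ) ^ r :=
        ENNReal.mul_rpow_of_nonneg _ _ (by linarith)
    _ ≤ _ := by
        gcongr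
        exact rpow_laverage_le_laverage_rpow (hF.setLAverage_ball t₁).aemeasurable hr

theorem setLIntegral_ball_setLAverage_ball_le {G : E → ℝ≥0∞} (hG : Measurable G) (y : E)
    {s t : ℝ} (ht : 0 < t) :
    ∫⁻ z in ball y s, ⨍⁻ w in ball z t, G w ∂μ ∂μ ≤ ∫⁻ w in ball y (s + t), G w ∂μ := by
  set V := μ (ball (0 : E) t)
  -- `G'` agrees with `G` on every `ball z t` with `z ∈ ball y s`, and lets the outer integral run
  -- over all of `E`.
  set G' := (ball y (s + t)).indicator G
  have hG' : Measurable G' := hG.indicator measurableSet_ball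
  calc ∫⁻ z in ball y s, ⨍⁻ w in ball z t, G w ∂μ ∂μ
      = ∫⁻ z in ball y s, V⁻¹ * ∫⁻ w in ball z t, G' w ∂μ ∂μ := by
        refine setLIntegral_congr_fun measurableSet_ball fun z hz => ?_
        rw [setLAverage_ball_eq]
        congr 1
        refine setLIntegral_congr_fun measurableSet_ball fun w hw =>
          (Set.indicator_of_mem (ball_subset_ball' (by linarith [mem_ball.1 hz]) hw) _).symm
    _ ≤ ∫⁻ z, V⁻¹ * ∫⁻ w in ball z t, G' w ∂μ ∂μ := setLIntegral_le_lintegral _ _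
    _ = ∫⁻ w, G' w ∂μ := by
        simp_rw [lintegral_const_mul _ (hG'.setLIntegral_ball t), lintegral_setLIntegral_ball hG',
          Measure.addHaar_ball_center μ _ t]
        rw [lintegral_const_mul' _ _ measure_ball_lt_top.ne, ← mul_assoc,
          ENNReal.inv_mul_cancel (measure_ball_pos μ 0 ht).ne' measure_ball_lt_top.ne, one_mul]
    _ = ∫⁻ w in ball y (s + t), G w ∂μ := lintegral_indicator measurableSet_ball _

theorem setLAverage_ball_rpow_setLAverage_le (hF : Measurable F) (y : E) {r t₁ t₂ s : ℝ}
    (hr : 1 ≤ r) (ht₁ : 0 < t₁) (ht₁₂ : t₁ ≤ t₂) (ht₂s : t₂ ≤ s) :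
    ⨍⁻ z in ball y s, (⨍⁻ u in ball z t₂, F u ∂μ) ^ r ∂μ ≤
      (2 ^ finrank ℝ E) ^ (1 + r) *
        ⨍⁻ w in ball y (s + t₂), (⨍⁻ u in ball w t₁, F u ∂μ) ^ r ∂μ := by
  set c : ℝ≥0∞ := 2 ^ finrank ℝ E
  set G := fun w => (⨍⁻ u in ball w t₁, F u ∂μ) ^ r
  have hc₀ : c ≠ 0 := by simp [c]
  have hc : c ≠ ∞ := by simp [c]
  have hG : Measurable G := (hF.setLAverage_ball t₁).pow_const r
  have hball : μ (ball y (s + t₂)) ≤ c * μ (ball y s) :=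
    calc μ (ball y (s + t₂)) ≤ μ (ball y (2 * s)) := measure_mono (ball_subset_ball (by linarith))
      _ = c * μ (ball y s) := addHaar_ball_two_mul y s
  have key : ∫⁻ z in ball y s, (⨍⁻ u in ball z t₂, F u ∂μ) ^ r ∂μ ≤
      c ^ r * ∫⁻ w in ball y (s + t₂), G w ∂μ :=
    calc ∫⁻ z in ball y s, (⨍⁻ u in ball z t₂, F u ∂μ) ^ r ∂μ
        ≤ ∫⁻ z in ball y s, c ^ r * ⨍⁻ w in ball z t₂, G w ∂μ ∂μ :=
          setLIntegral_mono' measurableSet_ball fun z _ =>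
            rpow_setLAverage_ball_le hF z hr ht₁ ht₁₂
      _ = c ^ r * ∫⁻ z in ball y s, ⨍⁻ w in ball z t₂, G w ∂μ ∂μ :=
          lintegral_const_mul' _ _ (ENNReal.rpow_ne_top_of_nonneg (by linarith) hc)
      _ ≤ c ^ r * ∫⁻ w in ball y (s + t₂), G w ∂μ := by
          gcongr c ^ r * ?_
          exact setLIntegral_ball_setLAverage_ball_le hG y (ht₁.trans_le ht₁₂)
  rw [setLAverage_eq, setLAverage_eq]
  calc (∫⁻ z in ball y s, (⨍⁻ u in ball z t₂, F u ∂μ) ^ r ∂μ) / μ (ball y s)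
      ≤ c * (c ^ r * ∫⁻ w in ball y (s + t₂), G w ∂μ) / (c * μ (ball y s)) := by
        rw [ENNReal.mul_div_mul_left _ _ hc₀ hc]
        exact ENNReal.div_le_div_right key _
    _ ≤ c * (c ^ r * ∫⁻ w in ball y (s + t₂), G w ∂μ) / μ (ball y (s + t₂)) :=
        ENNReal.div_le_div_left hball _
    _ = c ^ (1 + r) * ((∫⁻ w in ball y (s + t₂), G w ∂μ) / μ (ball y (s + t₂))) := by
        rw [ENNReal.rpow_add _ _ hc₀ hc, ENNReal.rpow_one, mul_assoc, mul_div_assoc, mul_div_assoc]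

theorem setLAverage_ball_rpow_setLAverage_ne_top {U : Set E} (hU : ∫⁻ u in U, F u ∂μ ≠ ∞)
    (y : E) {r t ρ : ℝ} (hr : 0 ≤ r) (ht : 0 < t) (hsub : ∀ w ∈ ball y ρ, ball w t ⊆ U) :
    ⨍⁻ w in ball y ρ, (⨍⁻ u in ball w t, F u ∂μ) ^ r ∂μ ≠ ∞ := by
  set K := (μ (ball (0 : E) t))⁻¹ * ∫⁻ u in U, F u ∂μ
  have hK : K ^ r ≠ ∞ := ENNReal.rpow_ne_top_of_nonneg hr
    (ENNReal.mul_ne_top (ENNReal.inv_ne_top.2 (measure_ball_pos μ 0 ht).ne') hU)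
  refine (setLAverage_lt_top (setLIntegral_lt_top_of_le_nnreal measure_ball_lt_top.ne
    ⟨(K ^ r).toNNReal, fun w hw => ?_⟩).ne).ne
  rw [ENNReal.coe_toNNReal hK]
  exact ENNReal.rpow_le_rpow (setLAverage_ball_le_of_subset (hsub w hw)) hr

end AddHaar

lemma avgOp_congr_ae {p t : ℝ} {g g' : (Fin 3 → ℝ) → ℝ} {z : Fin 3 → ℝ}
    (h : g =ᵐ[volume.restrict (cube z t)] g') : avgOp p t g z = avgOp p t g' z := by
  simp only [avgOp]
  congr 1
  exact average_congr (h.mono fun x hx => by simp only [hx])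

lemma avgOp_rpow_eq {p q t : ℝ} (hp : 0 < p) {g : (Fin 3 → ℝ) → ℝ} (hg : Measurable g)
    (z : Fin 3 → ℝ) :
    avgOp p t g z ^ q = ((⨍⁻ u in ball z t, ‖g u‖ₑ ^ p ∂volume) ^ (q / p)).toReal := by
  have h : ⨍ u in cube z t, |g u| ^ p = (⨍⁻ u in ball z t, ‖g u‖ₑ ^ p ∂volume).toReal := by
    rw [toReal_setLAverage (hg.enorm.pow_const p).aemeasurable
      (ae_of_all _ fun _ => ENNReal.rpow_ne_top_of_nonneg hp.le enorm_ne_top)]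
    simp only [cube, ← ENNReal.toReal_rpow, toReal_enorm, Real.norm_eq_abs]
  rw [avgOp, h, ← Real.rpow_mul ENNReal.toReal_nonneg, ENNReal.toReal_rpow, one_div_mul_eq_div]

lemma setAverage_avgOp_rpow_eq {p q t ρ : ℝ} (hp : 0 < p) (hq : 0 ≤ q) (ht : 0 < t)
    {g g' : (Fin 3 → ℝ) → ℝ} {U : Set (Fin 3 → ℝ)} (hg' : Measurable g')
    (hgg' : g =ᵐ[volume.restrict U] g') (hU : ∫⁻ u in U, ‖g' u‖ₑ ^ p ≠ ∞) {y : Fin 3 → ℝ}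
    (hsub : ∀ z ∈ ball y ρ, ball z t ⊆ U) :
    ⨍ z in cube y ρ, avgOp p t g z ^ q =
      (⨍⁻ z in ball y ρ, (⨍⁻ u in ball z t, ‖g' u‖ₑ ^ p ∂volume) ^ (q / p) ∂volume).toReal := by
  have hfin : ∀ z ∈ ball y ρ, (⨍⁻ u in ball z t, ‖g' u‖ₑ ^ p ∂volume) ^ (q / p) ≠ ∞ :=
    fun z hz => ENNReal.rpow_ne_top_of_nonneg (div_nonneg hq hp.le) (ne_top_of_le_ne_top
      (ENNReal.mul_ne_top (ENNReal.inv_ne_top.2 (measure_ball_pos volume 0 ht).ne') hU)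
      (setLAverage_ball_le_of_subset (hsub z hz)))
  rw [toReal_setLAverage (((hg'.enorm.pow_const p).setLAverage_ball t).pow_const _).aemeasurable
    ((ae_restrict_iff' measurableSet_ball).2 (ae_of_all _ hfin))]
  refine setAverage_congr_fun measurableSet_ball (ae_of_all _ fun z hz => ?_)
  rw [avgOp_congr_ae (ae_restrict_of_ae_restrict_of_subset (hsub z hz) hgg'), avgOp_rpow_eq hp hg']

/-- Lemma `lem.est.M.op.properties (iv)`: for `0 < t₁ ≤ t₂ ≤ s` with
`Q_{s+t₁+t₂}(y) ⊆ Q₁` and `q ∈ [p,∞)`,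
`⨍_{Q_s(y)} M_{t₂}^p[g]^q ≤ C ⨍_{Q_{s+t₂}(y)} M_{t₁}^p[g]^q`, with `C = C(p,q)`. -/
theorem avgOp_average_comparison (p q : ℝ) (hp : 1 ≤ p) (hpq : p ≤ q) :
    ∃ C : ℝ, 0 < C ∧
      ∀ g : (Fin 3 → ℝ) → ℝ,
        MemLp g (ENNReal.ofReal p) (volume.restrict (cube 0 1)) →
        ∀ (t₁ t₂ s : ℝ) (y : Fin 3 → ℝ), 0 < t₁ → t₁ ≤ t₂ → t₂ ≤ s →
          cube y (s + t₁ + t₂) ⊆ cube 0 1 →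
          (⨍ z in cube y s, (avgOp p t₂ g z) ^ q) ≤
            C * ⨍ z in cube y (s + t₂), (avgOp p t₁ g z) ^ q := by
  have hp₀ : 0 < p := one_pos.trans_le hp
  have hq : 0 ≤ q := hp₀.le.trans hpq
  have hr : 1 ≤ q / p := (one_le_div hp₀).2 hpq
  refine ⟨8 ^ (1 + q / p), by positivity, fun g hg t₁ t₂ s y ht₁ ht₁₂ ht₂s hsub => ?_⟩
  obtain ⟨g', hg', hgg'⟩ := hg.1.aemeasurable
  have hU : ∫⁻ u in cube 0 1, ‖g' u‖ₑ ^ p ≠ ∞ := by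
    simpa [ENNReal.toReal_ofReal hp₀.le] using (lintegral_rpow_enorm_lt_top_of_eLpNorm_lt_top
      (by simpa using hp₀) ENNReal.ofReal_ne_top (hg.ae_eq hgg').2).ne
  have hsub₂ : ∀ z ∈ ball y s, ball z t₂ ⊆ cube 0 1 := fun z hz =>
    (ball_subset_ball' (by linarith [mem_ball.1 hz])).trans hsub
  have hsub₁ : ∀ w ∈ ball y (s + t₂), ball w t₁ ⊆ cube 0 1 := fun w hw =>
    (ball_subset_ball' (by linarith [mem_ball.1 hw])).trans hsub
  rw [setAverage_avgOp_rpow_eq hp₀ hq (ht₁.trans_le ht₁₂) hg' hgg' hU hsub₂,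
    setAverage_avgOp_rpow_eq hp₀ hq ht₁ hg' hgg' hU hsub₁]
  have key := setLAverage_ball_rpow_setLAverage_le (μ := volume) (hg'.enorm.pow_const p) y hr
    ht₁ ht₁₂ ht₂s
  have hR := setLAverage_ball_rpow_setLAverage_ne_top (μ := volume) hU y (r := q / p)
    (by linarith) ht₁ hsub₁
  rw [Module.finrank_fin_fun] at key
  calc _ ≤ (((2 : ℝ≥0∞) ^ 3) ^ (1 + q / p) * _).toReal :=
        ENNReal.toReal_mono (ENNReal.mul_ne_top (by simp) hR) key
    _ = _ := by rw [ENNReal.toReal_mul, ← ENNReal.toReal_rpow]; norm_num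
end

section
/- Let p ∈ [1,∞) and let g ∈ L^p(Q₁). There exists a constant C depending only on p such that for all 0 < s ≤ t and all y with Q_{s+t}(y) ⊆ Q₁, one has M_t^p[g](y) ≤ C ⨍_{Q_s(y)} M_t^p[g](z) dz. -/
/-! Cover `Q_t(y)` by the `2³` cubes `Q_{t-s/4}(y + (±s/2, ±s/2, ±s/2))`; one of them carries at
least `2⁻³` of `∫_{Q_t(y)} |g|^p`. That cube lies in `Q_t(z)` for every `z` in the cube of side
`s/2` with the same centre, which fills `4⁻³` of `Q_s(y)`; there `M_t^p[g](z) ≥ 2^{-3/p} M_t^p[g](y)`,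
and averaging over `Q_s(y)` gives the bound with `C = 8³`. -/

open MeasureTheory

open Metric Set

section Integral

variable {α : Type*} [MeasurableSpace α] {μ : Measure α}

theorem setIntegral_le_sum_of_subset_iUnion {ι : Type*} [Fintype ι] {f : α → ℝ}
    {s : Set α} {u : ι → Set α} (hsu : s ⊆ ⋃ i, u i) (hf : Integrable f μ) (hf0 : 0 ≤ f) :
    ∫ x in s, f x ∂μ ≤ ∑ i, ∫ x in u i, f x ∂μ := by
  calc ∫ x in s, f x ∂μ ≤ ∫ x in ⋃ i, u i, f x ∂μ :=
        setIntegral_mono_set hf.integrableOn (ae_of_all _ hf0) hsu.eventuallyLE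
    _ ≤ ∫ x, f x ∂(∑ i, μ.restrict (u i)) := by
        rw [← Measure.sum_fintype]
        refine integral_mono_measure Measure.restrict_iUnion_le (ae_of_all _ hf0) ?_
        rw [Measure.sum_fintype]
        exact integrable_finsetSum_measure.2 fun i _ => hf.integrableOn
    _ = ∑ i, ∫ x in u i, f x ∂μ :=
        integral_finsetSum_measure fun i _ => hf.integrableOn

theorem measurable_setIntegral_ball [PseudoMetricSpace α] [OpensMeasurableSpace α]
    [SecondCountableTopology α] [SFinite μ] {f : α → ℝ} (hf : Measurable f) (r : ℝ) :
    Measurable fun z => ∫ w in ball z r, f w ∂μ := by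
  have hU : MeasurableSet {q : α × α | dist q.2 q.1 < r} :=
    (isOpen_lt (continuous_snd.dist continuous_fst) continuous_const).measurableSet
  have hF : StronglyMeasurable fun q : α × α => {q : α × α | dist q.2 q.1 < r}.indicator
      (fun q => f q.2) q :=
    ((hf.comp measurable_snd).indicator hU).stronglyMeasurable
  convert hF.integral_prod_right' (ν := μ) |>.measurable using 2 with z
  rw [← integral_indicator measurableSet_ball]
  rfl

theorem mul_measureReal_le_setIntegral {f : α → ℝ} {s u : Set α} {c : ℝ} (hsu : s ⊆ u)
    (hs : MeasurableSet s) (hμs : μ s ≠ ⊤) (hf : IntegrableOn f u μ) (hf0 : 0 ≤ᵐ[μ.restrict u] f)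
    (hc : ∀ x ∈ s, c ≤ f x) : c * μ.real s ≤ ∫ x in u, f x ∂μ :=
  (setIntegral_ge_of_const_le_real hs hμs hc (hf.mono_set hsu)).trans
    (setIntegral_mono_set hf hf0 hsu.eventuallyLE)

end Integral

section Cube

open Fintype

variable {ι : Type*} [Fintype ι]

def orthantPoint (y : ι → ℝ) (a : ℝ) (σ : ι → Bool) : ι → ℝ :=
  fun i => y i + if σ i then a else -a

theorem dist_orthantPoint_le (y : ι → ℝ) {a : ℝ} (ha : 0 ≤ a) (σ : ι → Bool) :
    dist (orthantPoint y a σ) y ≤ a := by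
  refine (dist_pi_le_iff ha).2 fun i => ?_
  simp only [orthantPoint, Real.dist_eq, add_sub_cancel_left]
  split_ifs <;> simp [abs_of_nonneg ha]

theorem ball_subset_iUnion_ball_orthantPoint (y : ι → ℝ) {a b t : ℝ} (hb : 0 ≤ b) (hba : b ≤ a)
    (hab : a + b < t) : ball y t ⊆ ⋃ σ, ball (orthantPoint y a σ) (t - b) := by
  intro w hw
  rw [mem_ball, dist_pi_lt_iff (by linarith)] at hw
  refine mem_iUnion.2 ⟨fun i => decide (y i ≤ w i), ?_⟩
  rw [mem_ball, dist_pi_lt_iff (by linarith)]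
  intro i
  have hwi := abs_lt.1 (Real.dist_eq .. ▸ hw i)
  by_cases h : y i ≤ w i <;>
    simp only [orthantPoint, h, decide_true, decide_false, if_true, Bool.false_eq_true, if_false,
      Real.dist_eq, abs_lt] <;> constructor <;> linarith

theorem volume_real_pi_ball (y : ι → ℝ) {r : ℝ} (hr : 0 < r) :
    volume.real (ball y r) = (2 * r) ^ card ι := by
  rw [measureReal_def, Real.volume_pi_ball y hr, ENNReal.toReal_ofReal (by positivity)]

theorem setAverage_ball_eq (f : (ι → ℝ) → ℝ) (y : ι → ℝ) {r : ℝ} (hr : 0 < r) :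
    ⨍ w in ball y r, f w = ((2 * r) ^ card ι)⁻¹ * ∫ w in ball y r, f w := by
  rw [setAverage_eq, smul_eq_mul, volume_real_pi_ball y hr]

variable {F : (ι → ℝ) → ℝ} {q t : ℝ}

theorem integrableOn_rpow_setAverage_ball (hFm : Measurable F) (hF0 : 0 ≤ F) (hFi : Integrable F)
    (hq : 0 ≤ q) (ht : 0 < t) {s : Set (ι → ℝ)} (hs : volume s ≠ ⊤) :
    IntegrableOn (fun z => (⨍ w in ball z t, F w) ^ q) s := by
  simp only [setAverage_ball_eq F _ ht]
  refine Measure.integrableOn_of_bounded hs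
    (((measurable_setIntegral_ball hFm t).const_mul _).pow_const q).aestronglyMeasurable
    (M := (((2 * t) ^ card ι)⁻¹ * ∫ w, F w) ^ q) (ae_of_all _ fun z => ?_)
  have hI0 : 0 ≤ ∫ w in ball z t, F w := integral_nonneg hF0
  rw [Real.norm_of_nonneg (by positivity)]
  gcongr ?_ ^ q
  exact mul_le_mul_of_nonneg_left (setIntegral_le_integral hFi (ae_of_all _ hF0)) (by positivity)

theorem exists_ball_forall_setIntegral_ball_le (hF0 : 0 ≤ F) (hFi : Integrable F) {s : ℝ}
    (hs : 0 < s) (hst : s ≤ t) (y : ι → ℝ) :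
    ∃ x, ball x (s / 4) ⊆ ball y s ∧
      ∀ z ∈ ball x (s / 4), ∫ w in ball y t, F w ≤ 2 ^ card ι * ∫ w in ball z t, F w := by
  classical
  set N : (ι → Bool) → ℝ := fun σ => ∫ w in ball (orthantPoint y (s / 2) σ) (t - s / 4), F w
  obtain ⟨S, -, hS⟩ := Finset.exists_max_image Finset.univ N ⟨fun _ => true, Finset.mem_univ _⟩
  refine ⟨orthantPoint y (s / 2) S,
    ball_subset_ball' (by linarith [dist_orthantPoint_le y (by linarith : 0 ≤ s / 2) S]),
    fun z hz => ?_⟩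
  have hNS : N S ≤ ∫ w in ball z t, F w :=
    setIntegral_mono_set hFi.integrableOn (ae_of_all _ hF0)
      (ball_subset_ball' (by linarith [mem_ball'.1 hz])).eventuallyLE
  calc ∫ w in ball y t, F w ≤ ∑ σ, N σ := setIntegral_le_sum_of_subset_iUnion
        (ball_subset_iUnion_ball_orthantPoint y (by linarith) (by linarith) (by linarith)) hFi hF0
    _ ≤ ∑ _σ : ι → Bool, N S := Finset.sum_le_sum fun σ _ => hS σ (Finset.mem_univ σ)
    _ = 2 ^ card ι * N S := by simp
    _ ≤ 2 ^ card ι * ∫ w in ball z t, F w := by gcongr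

theorem le_mul_setAverage_ball_of_forall_le {f : (ι → ℝ) → ℝ} {x y : ι → ℝ} {r s c : ℝ}
    (hr : 0 < r) (hs : 0 < s) (hxy : ball x r ⊆ ball y s) (hf : IntegrableOn f (ball y s))
    (hf0 : 0 ≤ᵐ[volume.restrict (ball y s)] f) (hc : ∀ z ∈ ball x r, c ≤ f z) :
    c ≤ (s / r) ^ card ι * ⨍ z in ball y s, f z := by
  have key := mul_measureReal_le_setIntegral hxy measurableSet_ball measure_ball_lt_top.ne hf hf0 hc
  rw [volume_real_pi_ball x hr] at key
  rw [setAverage_eq, smul_eq_mul, volume_real_pi_ball y hs]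
  have hscale : s / r * (2 * s)⁻¹ * (2 * r) = 1 := by field_simp
  calc c = (s / r * (2 * s)⁻¹ * (2 * r)) ^ card ι * c := by rw [hscale, one_pow, one_mul]
    _ = (s / r) ^ card ι * (((2 * s) ^ card ι)⁻¹ * (c * (2 * r) ^ card ι)) := by
        rw [mul_pow, mul_pow, inv_pow]
        ring
    _ ≤ _ := by gcongr

theorem rpow_setAverage_ball_le_setAverage (hFm : Measurable F) (hF0 : 0 ≤ F) (hFi : Integrable F)
    (hq0 : 0 ≤ q) (hq1 : q ≤ 1) {s : ℝ} (hs : 0 < s) (hst : s ≤ t) (y : ι → ℝ) :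
    (⨍ w in ball y t, F w) ^ q ≤ 8 ^ card ι * ⨍ z in ball y s, (⨍ w in ball z t, F w) ^ q := by
  have ht : 0 < t := hs.trans_le hst
  obtain ⟨x, hxy, hx⟩ := exists_ball_forall_setIntegral_ball_le hF0 hFi hs hst y
  have hpoint : ∀ z ∈ ball x (s / 4),
      ((2 : ℝ) ^ card ι)⁻¹ * (⨍ w in ball y t, F w) ^ q ≤ (⨍ w in ball z t, F w) ^ q := by
    intro z hz
    have hyz : ⨍ w in ball y t, F w ≤ 2 ^ card ι * ⨍ w in ball z t, F w := by
      rw [setAverage_ball_eq F y ht, setAverage_ball_eq F z ht, mul_left_comm]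
      gcongr
      exact hx z hz
    have hz0 : 0 ≤ ⨍ w in ball z t, F w := integral_nonneg hF0
    rw [inv_mul_le_iff₀ (by positivity)]
    calc (⨍ w in ball y t, F w) ^ q ≤ (2 ^ card ι * ⨍ w in ball z t, F w) ^ q :=
          Real.rpow_le_rpow (integral_nonneg hF0) hyz hq0
      _ = ((2 : ℝ) ^ card ι) ^ q * (⨍ w in ball z t, F w) ^ q :=
          Real.mul_rpow (by positivity) hz0
      _ ≤ 2 ^ card ι * (⨍ w in ball z t, F w) ^ q := by
          gcongr
          exact Real.rpow_le_self_of_one_le (one_le_pow₀ one_le_two) hq1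
  have havg := le_mul_setAverage_ball_of_forall_le (by positivity) hs hxy
    (integrableOn_rpow_setAverage_ball hFm hF0 hFi hq0 ht measure_ball_lt_top.ne)
    (ae_of_all _ fun z => Real.rpow_nonneg (integral_nonneg fun w => hF0 w) q) hpoint
  rw [inv_mul_le_iff₀ (by positivity), div_div_cancel₀ hs.ne', ← mul_assoc, ← mul_pow] at havg
  norm_num at havg
  exact havg

end Cube

theorem MemLp.integrable_indicator_abs_rpow {α : Type*} [MeasurableSpace α] {μ : Measure α}
    {U : Set α} (hU : MeasurableSet U) {p : ℝ} (hp : 0 < p) {g : α → ℝ}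
    (hg : MemLp g (ENNReal.ofReal p) (μ.restrict U)) :
    Integrable (U.indicator fun x => |g x| ^ p) μ := by
  rw [integrable_indicator_iff hU]
  have := hg.integrable_norm_rpow (by simpa using hp) ENNReal.ofReal_ne_top
  simp only [ENNReal.toReal_ofReal hp.le, Real.norm_eq_abs] at this
  exact this

theorem avgOp_eq_rpow_setAverage_indicator {p t : ℝ} {g h : (Fin 3 → ℝ) → ℝ}
    {U : Set (Fin 3 → ℝ)} (hgh : g =ᵐ[volume.restrict U] h) {z : Fin 3 → ℝ} (hz : cube z t ⊆ U) :
    avgOp p t g z = (⨍ w in ball z t, U.indicator (fun w => |h w| ^ p) w) ^ (1 / p) := by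
  have hgh' : ∀ᵐ w ∂volume, w ∈ ball z t → g w = h w :=
    (ae_restrict_iff' measurableSet_ball).1 (ae_restrict_of_ae_restrict_of_subset hz hgh)
  rw [avgOp, cube, setAverage_congr_fun measurableSet_ball ?_]
  filter_upwards [hgh'] with w hw hwz
  rw [hw hwz, indicator_of_mem (hz hwz)]

/-- Lemma `lem.est.M.op.properties (v)`: for `0 < s ≤ t` with `Q_{s+t}(y) ⊆ Q₁`,
`M_t^p[g](y) ≤ C ⨍_{Q_s(y)} M_t^p[g]`, with `C = C(p)`. -/
theorem avgOp_pointwise_by_average (p : ℝ) (hp : 1 ≤ p) :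
    ∃ C : ℝ, 0 < C ∧
      ∀ g : (Fin 3 → ℝ) → ℝ,
        MemLp g (ENNReal.ofReal p) (volume.restrict (cube 0 1)) →
        ∀ (s t : ℝ) (y : Fin 3 → ℝ), 0 < s → s ≤ t →
          cube y (s + t) ⊆ cube 0 1 →
          avgOp p t g y ≤ C * ⨍ z in cube y s, avgOp p t g z := by
  refine ⟨8 ^ 3, by norm_num, fun g hg s t y hs hst hsub => ?_⟩
  have hp0 : 0 < p := by linarith
  -- a measurable representative, so that `z ↦ ∫_{Q_t(z)} F` is measurable
  set F := (cube 0 1).indicator fun w => |hg.1.mk g w| ^ p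
  have hFm : Measurable F :=
    (hg.1.stronglyMeasurable_mk.measurable.abs.pow_const p).indicator measurableSet_ball
  have hF0 : 0 ≤ F := fun w => indicator_nonneg (fun w _ => by positivity) w
  have hFi : Integrable F :=
    MemLp.integrable_indicator_abs_rpow measurableSet_ball hp0 (hg.ae_eq hg.1.ae_eq_mk)
  have hM : ∀ z ∈ ball y s, avgOp p t g z = (⨍ w in ball z t, F w) ^ (1 / p) := fun z hz =>
    avgOp_eq_rpow_setAverage_indicator hg.1.ae_eq_mk
      ((ball_subset_ball' (by linarith [mem_ball.1 hz])).trans hsub)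
  rw [hM y (mem_ball_self hs), cube, setAverage_congr_fun measurableSet_ball (ae_of_all _ hM)]
  simpa using rpow_setAverage_ball_le_setAverage hFm hF0 hFi (by positivity)
    ((div_le_one hp0).2 hp) hs hst y
end

section
/- Let P : ℝ³ → ℝ³ be a vector field each of whose three components is a homogeneous polynomial of degree 2. Then P vanishes on the plane {x ∈ ℝ³ : x₃ = 0} and has identically zero divergence if and only if P is a real linear combination of P^{(21)}, P^{(22)}, P^{(23)}, P^{(24)}, P^{(25)}, P^{(26)}. Moreover these six vector fields are linearly independent, so the space of homogeneous degree-2 polynomial vector fields on ℝ³ that vanish on {x₃ = 0} and are divergence-free has dimension 6. -/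
/-- The divergence `∇·v = ∑ᵢ ∂ᵢvᵢ` of a vector field `v : ℝ³ → ℝ³`. -/
noncomputable def div3 (v : (Fin 3 → ℝ) → (Fin 3 → ℝ)) (x : Fin 3 → ℝ) : ℝ :=
  ∑ i : Fin 3, fderiv ℝ v x (Pi.single i 1) i

/-- The no-slip Stokes polynomials of degree 2:
`P^{(21)}(x) = (x₂x₃,0,0)`, `P^{(22)}(x) = (x₃²,0,0)`, `P^{(23)}(x) = (0,x₁x₃,0)`,
`P^{(24)}(x) = (0,x₃²,0)`, `P^{(25)}(x) = (−2x₁x₃,0,x₃²)`,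
`P^{(26)}(x) = (0,−2x₂x₃,x₃²)`. -/
noncomputable def P2 : Fin 6 → (Fin 3 → ℝ) → (Fin 3 → ℝ) :=
  ![fun x => ![x 1 * x 2, 0, 0],
    fun x => ![x 2 ^ 2, 0, 0],
    fun x => ![0, x 0 * x 2, 0],
    fun x => ![0, x 2 ^ 2, 0],
    fun x => ![-2 * x 0 * x 2, 0, x 2 ^ 2],
    fun x => ![0, -2 * x 1 * x 2, x 2 ^ 2]]

/-! A homogeneous quadratic field vanishing on `{x₃ = 0}` is divisible by `x₃`, so it has the
form `x ↦ x₃ • A x` for a matrix `A`. Its divergence is `(A x)₃ + x₃ tr A`, which vanishes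
identically iff `A₃₁ = A₃₂ = 0` and `A₁₁ + A₂₂ + 2 A₃₃ = 0`. The fields `P^{(2j)}` are exactly
`x ↦ x₃ • A x` for an explicit basis of this six-dimensional space of matrices, and
`A ↦ (x ↦ x₃ • A x)` is injective, which also gives linear independence. -/

open Matrix

theorem smul_mulVec_injective {R n : Type*} [Ring R] [Fintype n] [DecidableEq n] (m : n) :
    Function.Injective fun (A : Matrix n n R) (x : n → R) => x m • A *ᵥ x := by
  intro A B h
  have hAB (x : n → R) (hx : x m = 1) : A *ᵥ x = B *ᵥ x := by
    simpa [hx] using congrFun h x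
  have hm := hAB (Pi.single m 1) (by simp)
  have hcol (j : n) : A *ᵥ Pi.single j 1 = B *ᵥ Pi.single j 1 := by
    by_cases hjm : j = m
    · exact hjm ▸ hm
    · have h := hAB (Pi.single j 1 + Pi.single m 1) (by simp [Ne.symm hjm])
      rw [mulVec_add, mulVec_add, hm] at h
      exact add_right_cancel h
  ext i j
  simpa using congrFun (hcol j) i

theorem div3_smul_mulVec (A : Matrix (Fin 3) (Fin 3) ℝ) (m : Fin 3) (x : Fin 3 → ℝ) :
    div3 (fun y => y m • A *ᵥ y) x = (A *ᵥ x) m + x m * A.trace := by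
  have hA : HasFDerivAt (fun y => A *ᵥ y) (LinearMap.toContinuousLinearMap A.mulVecLin) x :=
    (LinearMap.toContinuousLinearMap A.mulVecLin).hasFDerivAt
  have hm : HasFDerivAt (fun y : Fin 3 → ℝ => y m) (ContinuousLinearMap.proj m) x :=
    hasFDerivAt_apply (𝕜 := ℝ) m x
  rw [div3, (hm.fun_smul hA).fderiv]
  simp only [_root_.add_apply, _root_.smul_apply, ContinuousLinearMap.smulRight_apply,
    ContinuousLinearMap.proj_apply, Pi.add_apply, Pi.smul_apply, smul_eq_mul,
    LinearMap.coe_toContinuousLinearMap', mulVecLin_apply, mulVec_single_one,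
    Finset.sum_add_distrib]
  rw [add_comm]
  congr 1
  · simp [Pi.single_apply]
  · simp [trace, Finset.mul_sum]

theorem div3_smul_mulVec_eq_zero_iff (A : Matrix (Fin 3) (Fin 3) ℝ) :
    (∀ x, div3 (fun y => y 2 • A *ᵥ y) x = 0) ↔
      A 2 0 = 0 ∧ A 2 1 = 0 ∧ A 0 0 + A 1 1 + 2 * A 2 2 = 0 := by
  simp only [div3_smul_mulVec]
  constructor
  · intro h
    have h0 := h ![1, 0, 0]
    have h1 := h ![0, 1, 0]
    have h2 := h ![0, 0, 1]
    simp only [mulVec, dotProduct, Fin.sum_univ_three, trace, diag_apply, Fin.isValue,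
      cons_val_zero, cons_val_one, cons_val, mul_one, mul_zero, zero_mul, one_mul, add_zero,
      zero_add] at h0 h1 h2
    exact ⟨h0, h1, by linarith⟩
  · rintro ⟨h20, h21, htr⟩ x
    simp only [mulVec, dotProduct, Fin.sum_univ_three, trace, diag_apply, Fin.isValue, h20, h21,
      zero_mul, add_zero, zero_add]
    linear_combination x 2 * htr

theorem quadratic_eq_mul_of_vanishing (c : Fin 3 → Fin 3 → ℝ)
    (h : ∀ x : Fin 3 → ℝ, x 2 = 0 → ∑ j, ∑ k, c j k * x j * x k = 0) (x : Fin 3 → ℝ) :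
    ∑ j, ∑ k, c j k * x j * x k
      = x 2 * ((c 0 2 + c 2 0) * x 0 + (c 1 2 + c 2 1) * x 1 + c 2 2 * x 2) := by
  have h0 := h ![1, 0, 0] rfl
  have h1 := h ![0, 1, 0] rfl
  have h01 := h ![1, 1, 0] rfl
  simp only [Fin.sum_univ_three, Fin.isValue, cons_val_zero, cons_val_one, cons_val, mul_one,
    mul_zero, add_zero, zero_add] at h0 h1 h01 ⊢
  linear_combination (x 0 ^ 2 - x 0 * x 1) * h0 + (x 1 ^ 2 - x 0 * x 1) * h1 + x 0 * x 1 * h01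

theorem exists_eq_smul_mulVec_of_vanishing (P : (Fin 3 → ℝ) → Fin 3 → ℝ)
    (c : Fin 3 → Fin 3 → Fin 3 → ℝ) (hc : ∀ x i, P x i = ∑ j, ∑ k, c i j k * x j * x k)
    (hvan : ∀ x, x 2 = 0 → P x = 0) :
    ∃ A : Matrix (Fin 3) (Fin 3) ℝ, P = fun x => x 2 • A *ᵥ x := by
  refine ⟨of fun i => ![c i 0 2 + c i 2 0, c i 1 2 + c i 2 1, c i 2 2], ?_⟩
  ext x i
  rw [hc, quadratic_eq_mul_of_vanishing (c i) fun y hy => by simpa [hc] using congrFun (hvan y hy) i]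
  simp [mulVec, dotProduct, Fin.sum_univ_three]

def noslipMatrix (b : Fin 6 → ℝ) : Matrix (Fin 3) (Fin 3) ℝ :=
  !![-2 * b 4, b 0, b 1; b 2, -2 * b 5, b 3; 0, 0, b 4 + b 5]

noncomputable def noslipCoeffs (A : Matrix (Fin 3) (Fin 3) ℝ) : Fin 6 → ℝ :=
  ![A 0 1, A 0 2, A 1 0, A 1 2, -A 0 0 / 2, -A 1 1 / 2]

theorem sum_smul_P2 (b : Fin 6 → ℝ) : ∑ j, b j • P2 j = fun x => x 2 • noslipMatrix b *ᵥ x := by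
  ext x i
  fin_cases i <;> simp [Fin.sum_univ_succ, P2, noslipMatrix, dotProduct] <;> ring

theorem noslipCoeffs_noslipMatrix : Function.LeftInverse noslipCoeffs noslipMatrix := by
  intro b
  ext k
  fin_cases k <;> simp [noslipCoeffs, noslipMatrix]

theorem exists_noslipMatrix_eq_iff (A : Matrix (Fin 3) (Fin 3) ℝ) :
    (∃ b, noslipMatrix b = A) ↔ A 2 0 = 0 ∧ A 2 1 = 0 ∧ A 0 0 + A 1 1 + 2 * A 2 2 = 0 := by
  constructor
  · rintro ⟨b, rfl⟩
    refine ⟨rfl, rfl, ?_⟩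
    simp only [noslipMatrix, of_apply, cons_val', cons_val_zero, cons_val_one, cons_val,
      cons_val_fin_one, Fin.isValue]
    ring
  · rintro ⟨h20, h21, htr⟩
    refine ⟨noslipCoeffs A, ?_⟩
    ext i j
    fin_cases i <;> fin_cases j <;> simp [noslipMatrix, noslipCoeffs, h20, h21] <;> linarith

/-- A vector field on `ℝ³` whose components are homogeneous quadratic polynomials
vanishes on `{x₃ = 0}` and is divergence-free iff it is a real linear combination of
`P^{(21)},…,P^{(26)}`; moreover these six fields are linearly independent, so the
space of such fields has dimension 6. -/
theorem quadratic_noslip_divfree_iff (P : (Fin 3 → ℝ) → (Fin 3 → ℝ))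
    (hP : ∃ c : Fin 3 → Fin 3 → Fin 3 → ℝ,
      ∀ (x : Fin 3 → ℝ) (i : Fin 3),
        P x i = ∑ j : Fin 3, ∑ k : Fin 3, c i j k * x j * x k) :
    (((∀ x : Fin 3 → ℝ, x 2 = 0 → P x = 0) ∧ (∀ x : Fin 3 → ℝ, div3 P x = 0)) ↔
      ∃ b : Fin 6 → ℝ, P = ∑ j : Fin 6, b j • P2 j) ∧
    LinearIndependent ℝ P2 := by
  refine ⟨⟨fun ⟨hvan, hdiv⟩ => ?_, ?_⟩, ?_⟩
  · obtain ⟨c, hc⟩ := hP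
    obtain ⟨A, rfl⟩ := exists_eq_smul_mulVec_of_vanishing P c hc hvan
    obtain ⟨b, rfl⟩ := (exists_noslipMatrix_eq_iff A).2 ((div3_smul_mulVec_eq_zero_iff A).1 hdiv)
    exact ⟨b, (sum_smul_P2 b).symm⟩
  · rintro ⟨b, rfl⟩
    rw [sum_smul_P2]
    exact ⟨fun x hx => by simp [hx],
      (div3_smul_mulVec_eq_zero_iff _).2 ((exists_noslipMatrix_eq_iff _).1 ⟨b, rfl⟩)⟩
  · rw [Fintype.linearIndependent_iff]
    intro g hg
    have h0 : ∑ j, g j • P2 j = ∑ j, (0 : Fin 6 → ℝ) j • P2 j := by simpa using hg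
    rw [sum_smul_P2, sum_smul_P2] at h0
    exact congrFun (noslipCoeffs_noslipMatrix.injective (smul_mulVec_injective 2 h0))
end
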